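/- Let A be a commutative ring, B a commutative A-algebra, and M an A-module. There is a canonical isomorphism of graded B-algebras Γ_A(M) ⊗_A B ≅ Γ_B(M ⊗_A B); in particular, for every k ≥ 0 one has Γ_k(M) ⊗_A B ≅ Γ_k(M ⊗_A B) as B-modules, compatibly with divided powers: m^{[k]} ⊗ 1 corresponds to (m ⊗ 1)^{[k]}. -/

import Mathlib

open scoped TensorProduct

universe u v

/-- A system of divided powers on a module `M` with values in a commutative `A`-algebra `B`. -/
structure IsDPSystem (A : Type u) [CommRing A] {M : Type v} [AddCommGroup M] [Module A M]
    {B : Type*} [CommRing B] [Algebra A B] (φ : ℕ → M → B) : Prop where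
  zero : ∀ m, φ 0 m = 1
  smul : ∀ (k : ℕ) (a : A) (m : M), φ k (a • m) = a ^ k • φ k m
  add : ∀ (k : ℕ) (m n : M),
    φ k (m + n) = ∑ ij ∈ Finset.HasAntidiagonal.antidiagonal k, φ ij.1 m * φ ij.2 n
  mul : ∀ (i j : ℕ) (m : M), φ i m * φ j m = ((i + j).choose i) • φ (i + j) m

/-- The divided power algebra `Γ_A(M)`, presented as a graded commutative `A`-algebra
equipped with divided power operations `dpow k : M → Γ_k`, universal among commutative
`A`-algebras receiving a system of divided powers of `M`. -/
structure DividedPowerAlgebra' (A : Type u) [CommRing A] (M : Type v) [AddCommGroup M]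
    [Module A M] where
  Γ : Type (max u v)
  [commRing : CommRing Γ]
  [algebra : Algebra A Γ]
  grading : ℕ → Submodule A Γ
  [gradedAlgebra : GradedAlgebra grading]
  dpow : ℕ → M → Γ
  dpow_mem : ∀ (k : ℕ) (m : M), dpow k m ∈ grading k
  isDP : IsDPSystem A dpow
  dpow_one_injective : Function.Injective (dpow 1)
  grading_one_eq : grading 1 = Submodule.span A (Set.range (dpow 1))
  lift : ∀ {B : Type (max u v)} [CommRing B] [Algebra A B] (φ : ℕ → M → B),
      IsDPSystem A φ → (Γ →ₐ[A] B)
  lift_dpow : ∀ {B : Type (max u v)} [CommRing B] [Algebra A B] (φ : ℕ → M → B)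
      (h : IsDPSystem A φ) (k : ℕ) (m : M), lift φ h (dpow k m) = φ k m
  lift_unique : ∀ {B : Type (max u v)} [CommRing B] [Algebra A B] (φ : ℕ → M → B)
      (h : IsDPSystem A φ) (g : Γ →ₐ[A] B), (∀ k m, g (dpow k m) = φ k m) → g = lift φ h

attribute [instance] DividedPowerAlgebra'.commRing DividedPowerAlgebra'.algebra
  DividedPowerAlgebra'.gradedAlgebra

/-! The assignment `m ↦ (1 ⊗ m)^[k]` is a system of divided powers over `A`, so the universal
property of `Γ_A(M)` gives an `A`-algebra map `Γ_A(M) → Γ_B(B ⊗ M)`, hence a `B`-algebra map out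
of `B ⊗ Γ_A(M)`. Conversely `B ⊗ Γ_A(M)` carries divided powers `(b ⊗ m)^[k] = bᵏ ⊗ m^[k]` of
`B ⊗ M` over `B`, and the universal property of `Γ_B(B ⊗ M)` gives the inverse: both composites
fix the divided powers, which generate. Since `Γ_A(M)` is generated by the homogeneous elements
`m^[k]`, the forward map is graded, and a bijective graded map sends each graded piece onto the
corresponding one. -/

open Finset TensorProduct

section Convolution

variable {R : Type*} [CommSemiring R]

theorem sum_antidiagonal_add_eq_of_eq_zero (h : ℕ × ℕ → R) (x : ℕ × ℕ) (j : ℕ)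
    (hx : ∀ z, z.1 < x.1 ∨ z.2 < x.2 → h z = 0) :
    ∑ y ∈ antidiagonal j, h (x + y) = ∑ z ∈ antidiagonal (x.1 + x.2 + j), h z := by
  refine (sum_map (antidiagonal j) (addLeftEmbedding x) h).symm.trans ?_
  refine sum_subset (fun z hz => ?_) fun z hz hzx => hx z ?_
  · obtain ⟨y, hy, rfl⟩ := mem_map.mp hz
    rw [HasAntidiagonal.mem_antidiagonal] at hy ⊢
    simp only [addLeftEmbedding_apply, Prod.fst_add, Prod.snd_add]
    omega
  · by_contra! hle
    rw [HasAntidiagonal.mem_antidiagonal] at hz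
    refine hzx (mem_map.mpr ⟨z - x, HasAntidiagonal.mem_antidiagonal.mpr ?_, ?_⟩)
    · simp only [Prod.fst_sub, Prod.snd_sub]
      omega
    · ext <;> simp only [addLeftEmbedding_apply, Prod.fst_add, Prod.snd_add, Prod.fst_sub,
        Prod.snd_sub] <;> omega

theorem sum_antidiagonal_mul_sum_antidiagonal_of_choose {f g : ℕ → R}
    (hf : ∀ p q, f p * f q = (p + q).choose p • f (p + q))
    (hg : ∀ p q, g p * g q = (p + q).choose p • g (p + q)) (i j : ℕ) :
    (∑ x ∈ antidiagonal i, f x.1 * g x.2) * (∑ y ∈ antidiagonal j, f y.1 * g y.2) =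
      (i + j).choose i • ∑ z ∈ antidiagonal (i + j), f z.1 * g z.2 := by
  set h : ℕ × ℕ → ℕ × ℕ → R := fun x z => (z.1.choose x.1 * z.2.choose x.2) • (f z.1 * g z.2)
  calc (∑ x ∈ antidiagonal i, f x.1 * g x.2) * (∑ y ∈ antidiagonal j, f y.1 * g y.2)
      = ∑ x ∈ antidiagonal i, ∑ y ∈ antidiagonal j, h x (x + y) := by
        rw [sum_mul_sum]
        refine sum_congr rfl fun x _ => sum_congr rfl fun y _ => ?_
        calc f x.1 * g x.2 * (f y.1 * g y.2) = (f x.1 * f y.1) * (g x.2 * g y.2) := by ring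
          _ = h x (x + y) := by rw [hf, hg, smul_mul_smul_comm]; rfl
    _ = ∑ x ∈ antidiagonal i, ∑ z ∈ antidiagonal (i + j), h x z := by
        refine sum_congr rfl fun x hx => ?_
        rw [sum_antidiagonal_add_eq_of_eq_zero _ x j, HasAntidiagonal.mem_antidiagonal.mp hx]
        rintro z (hz | hz) <;> simp [h, Nat.choose_eq_zero_of_lt hz]
    _ = (i + j).choose i • ∑ z ∈ antidiagonal (i + j), f z.1 * g z.2 := by
        rw [sum_comm, smul_sum]
        refine sum_congr rfl fun z hz => ?_
        rw [← sum_smul, ← Nat.add_choose_eq, HasAntidiagonal.mem_antidiagonal.mp hz]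

end Convolution

namespace IsDPSystem

variable {A : Type*} [CommRing A] {M : Type*} [AddCommGroup M] [Module A M]
  {C : Type*} [CommRing C] [Algebra A C] {φ : ℕ → M → C}

theorem apply_zero (h : IsDPSystem A φ) (k : ℕ) : φ k 0 = if k = 0 then 1 else 0 := by
  split_ifs with hk
  · rw [hk, h.zero]
  · simpa [zero_pow hk] using h.smul k 0 0

theorem map (h : IsDPSystem A φ) {C' : Type*} [CommRing C'] [Algebra A C'] (g : C →ₐ[A] C') :
    IsDPSystem A fun k m => g (φ k m) where
  zero m := by rw [h.zero, map_one]
  smul k a m := by rw [h.smul, map_smul]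
  add k m n := by simp only [h.add, map_sum, map_mul]
  mul i j m := by rw [← map_mul, h.mul, map_nsmul]

theorem of_map {C' : Type*} [CommRing C'] [Algebra A C'] {g : C →ₐ[A] C'}
    (hg : Function.Injective g) (h : IsDPSystem A fun k m => g (φ k m)) : IsDPSystem A φ where
  zero m := hg <| by rw [map_one]; exact h.zero m
  smul k a m := hg <| by rw [map_smul]; exact h.smul k a m
  add k m n := hg <| by simpa only [map_sum, map_mul] using h.add k m n
  mul i j m := hg <| by rw [map_mul, map_nsmul]; exact h.mul i j m

theorem comp_linearMap {B : Type*} [CommRing B] [Algebra A B] {N : Type*} [AddCommGroup N]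
    [Module A N] [Module B N] [IsScalarTower A B N] [Algebra B C] [IsScalarTower A B C]
    {ψ : ℕ → N → C} (h : IsDPSystem B ψ) (l : M →ₗ[A] N) :
    IsDPSystem A fun k m => ψ k (l m) where
  zero m := h.zero (l m)
  smul k a m := by
    rw [map_smul, ← algebraMap_smul B a, h.smul, ← map_pow, algebraMap_smul]
  add k m n := by rw [map_add, h.add]
  mul i j m := h.mul i j (l m)

theorem eq_of_mem_span {N : Type*} [AddCommGroup N] [Module A N] {ψ ψ' : ℕ → N → C}
    (h : IsDPSystem A ψ) (h' : IsDPSystem A ψ') {s : Set N}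
    (hs : ∀ k, ∀ x ∈ s, ψ k x = ψ' k x) {x : N} (hx : x ∈ Submodule.span A s) (k : ℕ) :
    ψ k x = ψ' k x := by
  induction hx using Submodule.span_induction generalizing k with
  | mem x hx => exact hs k x hx
  | zero => rw [h.apply_zero, h'.apply_zero]
  | add x y _ _ hx hy => simp only [h.add, h'.add, hx, hy]
  | smul a x _ hx => rw [h.smul, h'.smul, hx]

section BaseChange

variable {B : Type*} [CommRing B] [Algebra A B]

variable (A φ) in
noncomputable def tmulExp (b : B) (m : M) : PowerSeries (B ⊗[A] C) :=
  PowerSeries.mk fun k => (b ^ k) ⊗ₜ[A] φ k m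

theorem tmulExp_zero_left (h : IsDPSystem A φ) (m : M) : tmulExp A φ (0 : B) m = 1 := by
  ext (_ | k) <;> simp [tmulExp, h.zero, Algebra.TensorProduct.one_def]

theorem tmulExp_add_left (h : IsDPSystem A φ) (b b' : B) (m : M) :
    tmulExp A φ (b + b') m = tmulExp A φ b m * tmulExp A φ b' m := by
  ext k
  simp only [tmulExp, PowerSeries.coeff_mk, PowerSeries.coeff_mul,
    Algebra.TensorProduct.tmul_mul_tmul, (Commute.all b b').add_pow' k, sum_tmul]
  refine sum_congr rfl fun p hp => ?_
  rw [h.mul, HasAntidiagonal.mem_antidiagonal.mp hp, tmul_smul, smul_tmul']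

theorem tmulExp_zero_right (h : IsDPSystem A φ) (b : B) : tmulExp A φ b 0 = 1 := by
  ext (_ | k) <;> simp [tmulExp, h.apply_zero, Algebra.TensorProduct.one_def]

theorem tmulExp_add_right (h : IsDPSystem A φ) (b : B) (m n : M) :
    tmulExp A φ b (m + n) = tmulExp A φ b m * tmulExp A φ b n := by
  ext k
  simp only [tmulExp, PowerSeries.coeff_mk, PowerSeries.coeff_mul, h.add, tmul_sum,
    Algebra.TensorProduct.tmul_mul_tmul]
  refine sum_congr rfl fun p hp => ?_
  rw [← pow_add, HasAntidiagonal.mem_antidiagonal.mp hp]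

theorem tmulExp_smul (h : IsDPSystem A φ) (a : A) (b : B) (m : M) :
    tmulExp A φ (a • b) m = tmulExp A φ b (a • m) := by
  ext k
  simp only [tmulExp, PowerSeries.coeff_mk, smul_pow, h.smul, tmul_smul, smul_tmul']

/- The base-changed divided powers `ψₖ(b ⊗ m) = bᵏ ⊗ φₖ(m)` are not additive in `b ⊗ m`, but
their generating series `∑ₖ ψₖ(x) Xᵏ` must turn sums into products; this is how `ψ` is extended
from pure tensors. -/
variable (B) in
noncomputable def baseChangeExp (h : IsDPSystem A φ) :
    B ⊗[A] M →+ Additive (PowerSeries (B ⊗[A] C)) :=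
  TensorProduct.liftAddHom
    { toFun b :=
        { toFun m := .ofMul (tmulExp A φ b m)
          map_zero' := congrArg Additive.ofMul (h.tmulExp_zero_right b)
          map_add' m n := congrArg Additive.ofMul (h.tmulExp_add_right b m n) }
      map_zero' := AddMonoidHom.ext fun m => congrArg Additive.ofMul (h.tmulExp_zero_left m)
      map_add' b b' :=
        AddMonoidHom.ext fun m => congrArg Additive.ofMul (h.tmulExp_add_left b b' m) }
    fun a b m => congrArg Additive.ofMul (h.tmulExp_smul a b m)

variable (B) in
noncomputable def baseChange (h : IsDPSystem A φ) (k : ℕ) (x : B ⊗[A] M) : B ⊗[A] C :=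
  PowerSeries.coeff k (h.baseChangeExp B x).toMul

theorem baseChange_tmul (h : IsDPSystem A φ) (k : ℕ) (b : B) (m : M) :
    h.baseChange B k (b ⊗ₜ m) = (b ^ k) ⊗ₜ φ k m := by
  simp [baseChange, baseChangeExp, tmulExp]

theorem baseChange_apply_zero (h : IsDPSystem A φ) (k : ℕ) :
    h.baseChange B k 0 = if k = 0 then 1 else 0 := by
  simp [baseChange, PowerSeries.coeff_one]

theorem baseChange_add (h : IsDPSystem A φ) (k : ℕ) (x y : B ⊗[A] M) :
    h.baseChange B k (x + y) =
      ∑ p ∈ antidiagonal k, h.baseChange B p.1 x * h.baseChange B p.2 y := by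
  simp [baseChange, PowerSeries.coeff_mul]

theorem baseChangeExp_smul (h : IsDPSystem A φ) (b : B) (x : B ⊗[A] M) :
    (h.baseChangeExp B (b • x)).toMul =
      PowerSeries.rescale (algebraMap B (B ⊗[A] C) b) (h.baseChangeExp B x).toMul := by
  induction x using TensorProduct.induction_on with
  | zero => simp
  | tmul b' m =>
    ext k
    simp [baseChangeExp, tmulExp, smul_tmul', PowerSeries.coeff_rescale, mul_pow,
      Algebra.TensorProduct.tmul_pow]
  | add x y hx hy => simp only [smul_add, map_add, toMul_add, hx, hy, map_mul]

theorem baseChange_smul (h : IsDPSystem A φ) (k : ℕ) (b : B) (x : B ⊗[A] M) :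
    h.baseChange B k (b • x) = b ^ k • h.baseChange B k x := by
  rw [baseChange, baseChangeExp_smul, PowerSeries.coeff_rescale, Algebra.smul_def, map_pow]
  rfl

variable (B) in
theorem isDPSystem_baseChange (h : IsDPSystem A φ) : IsDPSystem B (h.baseChange B) where
  zero x := by
    induction x using TensorProduct.induction_on with
    | zero => simp [baseChange_apply_zero]
    | tmul b m => simp [baseChange_tmul, h.zero, Algebra.TensorProduct.one_def]
    | add x y hx hy => simp [baseChange_add, hx, hy]
  smul := h.baseChange_smul
  add := h.baseChange_add
  mul i j x := by
    induction x using TensorProduct.induction_on generalizing i j with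
    | zero =>
      by_cases hi : i = 0 <;> by_cases hj : j = 0 <;> simp [baseChange_apply_zero, hi, hj]
    | tmul b m =>
      simp only [baseChange_tmul, Algebra.TensorProduct.tmul_mul_tmul, ← pow_add, h.mul,
        tmul_smul]
    | add x y hx hy =>
      simp only [baseChange_add]
      exact sum_antidiagonal_mul_sum_antidiagonal_of_choose hx hy i j

end BaseChange

end IsDPSystem

theorem GradedAlgHom.map_eq_of_surjective {R A B : Type*} [CommSemiring R] [Semiring A]
    [Semiring B] [Algebra R A] [Algebra R B] {ι : Type*} [DecidableEq ι] [AddMonoid ι]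
    {𝒜 : ι → Submodule R A} {ℬ : ι → Submodule R B} [GradedAlgebra 𝒜] [GradedAlgebra ℬ]
    (f : 𝒜 →ₐᵍ[R] ℬ) (hf : Function.Surjective f) (i : ι) :
    Submodule.map (f : A →ₐ[R] B).toLinearMap (𝒜 i) = ℬ i := by
  refine le_antisymm (Submodule.map_le_iff_le_comap.mpr fun x hx => Graded.map_mem f hx)
    fun y hy => ?_
  obtain ⟨x, rfl⟩ := hf y
  refine ⟨DirectSum.decompose 𝒜 x i, SetLike.coe_mem _, ?_⟩
  rw [AlgHom.toLinearMap_apply, GradedAlgHom.coe_toAlgHom,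
    map_directSumDecompose 𝒜 ℬ f, DirectSum.decompose_of_mem_same ℬ hy]

namespace DividedPowerAlgebra'

variable {A : Type u} [CommRing A] {M : Type v} [AddCommGroup M] [Module A M]
  (D : DividedPowerAlgebra' A M)

theorem algHom_ext {C : Type (max u v)} [CommRing C] [Algebra A C] {g g' : D.Γ →ₐ[A] C}
    (h : ∀ k m, g (D.dpow k m) = g' (D.dpow k m)) : g = g' :=
  have hφ := D.isDP.map g
  (D.lift_unique _ hφ g fun _ _ => rfl).trans
    (D.lift_unique _ hφ g' fun k m => (h k m).symm).symm

theorem adjoin_range_dpow :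
    Algebra.adjoin A (Set.range fun p : ℕ × M => D.dpow p.1 p.2) = ⊤ := by
  set S := Algebra.adjoin A (Set.range fun p : ℕ × M => D.dpow p.1 p.2)
  have hS : IsDPSystem A fun k m => (⟨D.dpow k m, Algebra.subset_adjoin ⟨(k, m), rfl⟩⟩ : S) :=
    .of_map (g := S.val) Subtype.val_injective D.isDP
  have hsection : S.val.comp (D.lift _ hS) = AlgHom.id A D.Γ :=
    D.algHom_ext fun k m => by simp [D.lift_dpow]
  refine eq_top_iff.mpr fun x _ => ?_
  rw [← AlgHom.id_apply (R := A) x, ← hsection]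
  exact (D.lift _ hS x).2

theorem map_mem_of_mem_grading {C : Type*} [CommRing C] [Algebra A C] {ℬ : ℕ → Submodule A C}
    [SetLike.GradedMonoid ℬ] (g : D.Γ →ₐ[A] C) (hg : ∀ k m, g (D.dpow k m) ∈ ℬ k) {k : ℕ}
    {x : D.Γ} (hx : x ∈ D.grading k) : g x ∈ ℬ k := by
  let P : D.Γ → Prop := fun y => ∀ d, g (DirectSum.decompose D.grading y d) ∈ ℬ d
  have of_homogeneous {n : ℕ} {y : D.Γ} (hy : y ∈ D.grading n) (hgy : g y ∈ ℬ n) : P y := by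
    intro d
    by_cases hd : n = d
    · rwa [← hd, DirectSum.decompose_of_mem_same _ hy]
    · rw [DirectSum.decompose_of_mem_ne _ hy hd, map_zero]
      exact zero_mem _
  have hP : P x := by
    refine Algebra.adjoin_induction (p := fun y _ => P y) ?_ ?_ ?_ ?_
      (D.adjoin_range_dpow ▸ Algebra.mem_top (x := x))
    · rintro _ ⟨⟨k, m⟩, rfl⟩
      exact of_homogeneous (D.dpow_mem k m) (hg k m)
    · intro a
      exact of_homogeneous (SetLike.algebraMap_mem_graded _ a)
        (g.commutes a ▸ SetLike.algebraMap_mem_graded ℬ a)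
    · intro y z _ _ hy hz d
      rw [DirectSum.decompose_add, DirectSum.add_apply, Submodule.coe_add, map_add]
      exact add_mem (hy d) (hz d)
    · intro y z _ _ hy hz d
      rw [DirectSum.decompose_mul, DirectSum.coe_mul_apply_eq_sum_antidiagonal, map_sum]
      refine sum_mem fun p hp => ?_
      rw [map_mul, ← HasAntidiagonal.mem_antidiagonal.mp hp]
      exact SetLike.mul_mem_graded (hy p.1) (hz p.2)
  simpa only [DirectSum.decompose_of_mem_same _ hx] using hP k

section BaseChange

variable {A : Type u} [CommRing A] {M : Type v} [AddCommGroup M] [Module A M]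
  (B : Type (max u v)) [CommRing B] [Algebra A B]
  (G : DividedPowerAlgebra' A M) (G' : DividedPowerAlgebra' B (B ⊗[A] M))

abbrev algebraBaseChange : Algebra A G'.Γ := Algebra.compHom G'.Γ (algebraMap A B)

attribute [local instance] algebraBaseChange

theorem isScalarTower_baseChange : IsScalarTower A B G'.Γ :=
  IsScalarTower.of_algebraMap_eq' rfl

attribute [local instance] isScalarTower_baseChange

noncomputable def toBaseChange :
    G.grading →ₐᵍ[A] fun k => (G'.grading k).restrictScalars A where
  toAlgHom := G.lift _ (G'.isDP.comp_linearMap (TensorProduct.mk A B M 1))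
  map_mem := G.map_mem_of_mem_grading (ℬ := fun k => (G'.grading k).restrictScalars A) _
    fun k m => by
      rw [G.lift_dpow]
      exact G'.dpow_mem k _

theorem toBaseChange_dpow (k : ℕ) (m : M) :
    G.toBaseChange B G' (G.dpow k m) = G'.dpow k (1 ⊗ₜ m) :=
  G.lift_dpow _ (G'.isDP.comp_linearMap (TensorProduct.mk A B M 1)) k m

noncomputable def baseChangeHom : (fun k => (G.grading k).baseChange B) →ₐᵍ[B] G'.grading :=
  GradedAlgHom.liftEquiv _ _ (G.toBaseChange B G')

theorem baseChangeHom_tmul_dpow (k : ℕ) (m : M) :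
    G.baseChangeHom B G' (1 ⊗ₜ G.dpow k m) = G'.dpow k (1 ⊗ₜ m) := by
  rw [baseChangeHom, GradedAlgHom.liftEquiv_tmul, one_smul, toBaseChange_dpow]

noncomputable def baseChangeInv : G'.Γ →ₐ[B] B ⊗[A] G.Γ :=
  G'.lift _ (G.isDP.isDPSystem_baseChange B)

theorem baseChangeInv_dpow (k : ℕ) (x : B ⊗[A] M) :
    G.baseChangeInv B G' (G'.dpow k x) = G.isDP.baseChange B k x :=
  G'.lift_dpow _ (G.isDP.isDPSystem_baseChange B) k x

theorem baseChangeHom_comp_baseChangeInv :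
    (G.baseChangeHom B G' : B ⊗[A] G.Γ →ₐ[B] G'.Γ).comp (G.baseChangeInv B G') =
      AlgHom.id B G'.Γ := by
  have hspan : Submodule.span B ((⊤ : Submodule A M).map (TensorProduct.mk A B M 1) :
      Set (B ⊗[A] M)) = ⊤ := by
    rw [← Submodule.baseChange_eq_span, Submodule.baseChange_top]
  refine G'.algHom_ext fun k x => ?_
  rw [AlgHom.comp_apply, baseChangeInv_dpow, AlgHom.id_apply]
  refine ((G.isDP.isDPSystem_baseChange B).map (G.baseChangeHom B G' : _ →ₐ[B] G'.Γ))
    |>.eq_of_mem_span G'.isDP ?_ (hspan ▸ Submodule.mem_top) k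
  rintro k _ ⟨m, -, rfl⟩
  simp [IsDPSystem.baseChange_tmul, baseChangeHom_tmul_dpow]

theorem baseChangeInv_comp_baseChangeHom :
    (G.baseChangeInv B G').comp (G.baseChangeHom B G') = AlgHom.id B (B ⊗[A] G.Γ) := by
  refine Algebra.TensorProduct.ext (Subsingleton.elim _ _) (G.algHom_ext fun k m => ?_)
  simp [baseChangeHom_tmul_dpow, baseChangeInv_dpow, IsDPSystem.baseChange_tmul]

noncomputable def baseChangeEquiv : B ⊗[A] G.Γ ≃ₐ[B] G'.Γ :=
  .ofAlgHom (G.baseChangeHom B G') (G.baseChangeInv B G')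
    (G.baseChangeHom_comp_baseChangeInv B G') (G.baseChangeInv_comp_baseChangeHom B G')

end BaseChange

end DividedPowerAlgebra'

/-- Base change for divided power algebras: for a commutative `A`-algebra
`B` there is a canonical isomorphism of graded `B`-algebras
`Γ_A(M) ⊗_A B ≅ Γ_B(M ⊗_A B)`; in particular `Γ_k(M) ⊗_A B ≅ Γ_k(M ⊗_A B)` for every `k`,
compatibly with divided powers: `m^{[k]} ⊗ 1` corresponds to `(m ⊗ 1)^{[k]}`. -/
theorem dividedPowerAlgebra_baseChange
    {A : Type u} [CommRing A] {M : Type v} [AddCommGroup M] [Module A M]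
    (B : Type (max u v)) [CommRing B] [Algebra A B]
    (G : DividedPowerAlgebra' A M) (G' : DividedPowerAlgebra' B (B ⊗[A] M)) :
    ∃ e : (B ⊗[A] G.Γ) ≃ₐ[B] G'.Γ,
      (∀ (k : ℕ) (m : M),
        e ((1 : B) ⊗ₜ[A] G.dpow k m) = G'.dpow k ((1 : B) ⊗ₜ[A] m)) ∧
      (∀ k : ℕ,
        Submodule.map e.toLinearMap ((G.grading k).baseChange B) = G'.grading k) :=
  ⟨G.baseChangeEquiv B G', G.baseChangeHom_tmul_dpow B G',
    (G.baseChangeHom B G').map_eq_of_surjective (G.baseChangeEquiv B G').surjective⟩
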